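/- For every 0 ≤ ε < 1, the Ptolemy constant of the ellipse satisfies the upper bound P(ε) ≤ 1/sin(π√(1 − ε²)/2). -/

import Mathlib

open Real

/-- The point `(cos θ, √(1 - ε²) · sin θ)` on the ellipse `x² + y²/(1-ε²) = 1`. -/
noncomputable def ellipsePoint (ε θ : ℝ) : EuclideanSpace ℝ (Fin 2) :=
  WithLp.toLp 2 ![Real.cos θ, Real.sqrt (1 - ε ^ 2) * Real.sin θ]

/-- The Ptolemy ratio of four points in the Euclidean plane. -/
noncomputable def ptolemyRatio (v₁ v₂ v₃ v₄ : EuclideanSpace ℝ (Fin 2)) : ℝ :=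
  (‖v₁ - v₂‖ * ‖v₃ - v₄‖ + ‖v₁ - v₄‖ * ‖v₂ - v₃‖) / (‖v₁ - v₃‖ * ‖v₂ - v₄‖)

/-- The Ptolemy constant of the ellipse of eccentricity `ε`: the supremum of the
Ptolemy ratio over all `0 ≤ θ₁ < θ₂ < θ₃ < θ₄ < 2π`. -/
noncomputable def ellipsePtolemyConst (ε : ℝ) : ℝ :=
  sSup {r : ℝ | ∃ θ₁ θ₂ θ₃ θ₄ : ℝ, 0 ≤ θ₁ ∧ θ₁ < θ₂ ∧ θ₂ < θ₃ ∧ θ₃ < θ₄ ∧ θ₄ < 2 * π ∧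
    r = ptolemyRatio (ellipsePoint ε θ₁) (ellipsePoint ε θ₂) (ellipsePoint ε θ₃)
        (ellipsePoint ε θ₄)}

/-!
Write `b = √(1 - ε²)`. The chord of the ellipse `t ↦ (cos t, b sin t)` between the parameters
`x < y` has length `2 sin ((y - x)/2) · √g(x + y)`, where `g(2t) = sin² t + b² cos² t` lies in
`[b², 1]`. For ordered parameters `t₁ < t₂ < t₃ < t₄`, put `w₁ = s₁₂ s₃₄`, `w₂ = s₁₄ s₂₃`,
`w₃ = s₁₃ s₂₄` with `sᵢⱼ = sin ((tⱼ - tᵢ)/2)`. Since `g` is affine in `cos`, Ptolemy's equality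
`w₁ + w₂ = w₃` for the circle together with its `cos`-weighted companion gives
`w₁ (g₁₂ + g₃₄) + w₂ (g₁₄ + g₂₃) = w₃ (g₁₃ + g₂₄)`. AM–GM bounds the products `√(gᵢⱼ gₖₗ)` in the
numerator of the Ptolemy ratio by arithmetic means, and the reverse AM–GM inequality on `[b², 1]`
bounds the arithmetic mean in the denominator by `(1 + b²)/(2b) · √(g₁₃ g₂₄)`. So the Ptolemy
ratio is at most `(1 + b²)/(2b)`, which is at most `1 / sin (π b / 2)` for `0 < b ≤ 1`.
-/

/-- `chordFactor b (2 * t) = sin t ^ 2 + b ^ 2 * cos t ^ 2` is the squared speed of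
`t ↦ (cos t, b sin t)`. -/
noncomputable def chordFactor (b z : ℝ) : ℝ := (1 + b ^ 2) / 2 - (1 - b ^ 2) / 2 * cos z

lemma chordFactor_mem_Icc {b : ℝ} (hb : b ^ 2 ≤ 1) (z : ℝ) :
    chordFactor b z ∈ Set.Icc (b ^ 2) 1 := by
  unfold chordFactor
  constructor <;> nlinarith [neg_one_le_cos z, cos_le_one z]

lemma sqrt_chordFactor_mem_Icc {b : ℝ} (hb₀ : 0 ≤ b) (hb₁ : b ≤ 1) (z : ℝ) :
    √(chordFactor b z) ∈ Set.Icc b 1 := by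
  obtain ⟨hlo, hhi⟩ := chordFactor_mem_Icc (pow_le_one₀ hb₀ hb₁) z
  exact ⟨(sqrt_sq hb₀).symm.trans_le (sqrt_le_sqrt hlo), sqrt_le_one.2 hhi⟩

lemma norm_ellipsePoint_sub (ε x y : ℝ) :
    ‖ellipsePoint ε x - ellipsePoint ε y‖
      = 2 * |sin ((y - x) / 2)| * √(chordFactor √(1 - ε ^ 2) (x + y)) := by
  have hsq : ‖ellipsePoint ε x - ellipsePoint ε y‖ ^ 2
      = (2 * |sin ((y - x) / 2)|) ^ 2 * chordFactor √(1 - ε ^ 2) (x + y) := by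
    obtain ⟨m, d, rfl, rfl⟩ : ∃ m d, x = m - d ∧ y = m + d :=
      ⟨(x + y) / 2, (y - x) / 2, by ring, by ring⟩
    rw [EuclideanSpace.norm_sq_eq, Fin.sum_univ_two, mul_pow, sq_abs, chordFactor,
      show m - d + (m + d) = 2 * m by ring, show (m + d - (m - d)) / 2 = d by ring, cos_two_mul]
    simp only [ellipsePoint, PiLp.sub_apply, Matrix.cons_val_zero, Matrix.cons_val_one,
      Real.norm_eq_abs, sq_abs, cos_sub, cos_add, sin_sub, sin_add]
    linear_combination (4 * sin d ^ 2) * sin_sq_add_cos_sq m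
  rw [← sqrt_sq (norm_nonneg _), hsq, sqrt_mul (sq_nonneg _), sqrt_sq (by positivity)]

lemma sin_half_ptolemy (t₁ t₂ t₃ t₄ : ℝ) :
    sin ((t₂ - t₁) / 2) * sin ((t₄ - t₃) / 2) + sin ((t₄ - t₁) / 2) * sin ((t₃ - t₂) / 2)
      = sin ((t₃ - t₁) / 2) * sin ((t₄ - t₂) / 2) := by
  simp only [sub_div, sin_sub]
  ring

lemma sin_half_ptolemy_cos_add (t₁ t₂ t₃ t₄ : ℝ) :
    sin ((t₂ - t₁) / 2) * sin ((t₄ - t₃) / 2) * (cos (t₁ + t₂) + cos (t₃ + t₄))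
      + sin ((t₄ - t₁) / 2) * sin ((t₃ - t₂) / 2) * (cos (t₁ + t₄) + cos (t₂ + t₃))
      = sin ((t₃ - t₁) / 2) * sin ((t₄ - t₂) / 2) * (cos (t₁ + t₃) + cos (t₂ + t₄)) := by
  rw [cos_add_cos, cos_add_cos, cos_add_cos]
  simp only [sub_div, add_div, sin_sub, cos_sub, sin_add, cos_add]
  ring

lemma chordFactor_ptolemy (b t₁ t₂ t₃ t₄ : ℝ) :
    sin ((t₂ - t₁) / 2) * sin ((t₄ - t₃) / 2) * (chordFactor b (t₁ + t₂) + chordFactor b (t₃ + t₄))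
      + sin ((t₄ - t₁) / 2) * sin ((t₃ - t₂) / 2)
        * (chordFactor b (t₁ + t₄) + chordFactor b (t₂ + t₃))
      = sin ((t₃ - t₁) / 2) * sin ((t₄ - t₂) / 2)
        * (chordFactor b (t₁ + t₃) + chordFactor b (t₂ + t₄)) := by
  unfold chordFactor
  linear_combination (1 + b ^ 2) * sin_half_ptolemy t₁ t₂ t₃ t₄
    - (1 - b ^ 2) / 2 * sin_half_ptolemy_cos_add t₁ t₂ t₃ t₄

/-- Reverse AM–GM: the difference of the two sides is `(u α - l β) (u β - l α) ≥ 0`. -/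
lemma mul_mul_add_sq_le_of_mem_Icc {l u α β : ℝ} (hl : 0 ≤ l)
    (hα : α ∈ Set.Icc l u) (hβ : β ∈ Set.Icc l u) :
    l * u * (α ^ 2 + β ^ 2) ≤ (l ^ 2 + u ^ 2) * (α * β) := by
  obtain ⟨hlα, hαu⟩ := hα
  obtain ⟨hlβ, hβu⟩ := hβ
  nlinarith [mul_nonneg (by nlinarith : 0 ≤ u * α - l * β) (by nlinarith : 0 ≤ u * β - l * α)]

lemma mul_add_mul_le_of_sq_add_sq_eq {b w₁ w₂ w₃ a₁ a₂ a₃ a₄ c₁ c₂ : ℝ} (hb : 0 < b)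
    (hw₁ : 0 ≤ w₁) (hw₂ : 0 ≤ w₂) (hw₃ : 0 ≤ w₃)
    (hc₁ : c₁ ∈ Set.Icc b 1) (hc₂ : c₂ ∈ Set.Icc b 1)
    (h : w₁ * (a₁ ^ 2 + a₂ ^ 2) + w₂ * (a₃ ^ 2 + a₄ ^ 2) = w₃ * (c₁ ^ 2 + c₂ ^ 2)) :
    w₁ * (a₁ * a₂) + w₂ * (a₃ * a₄) ≤ (1 + b ^ 2) / (2 * b) * (w₃ * (c₁ * c₂)) := by
  have hrev := mul_mul_add_sq_le_of_mem_Icc hb.le hc₁ hc₂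
  rw [mul_one, one_pow, add_comm (b ^ 2)] at hrev
  rw [div_mul_eq_mul_div, le_div_iff₀ (by positivity)]
  nlinarith [mul_le_mul_of_nonneg_left (two_mul_le_add_sq a₁ a₂) hw₁,
    mul_le_mul_of_nonneg_left (two_mul_le_add_sq a₃ a₄) hw₂, mul_le_mul_of_nonneg_left hrev hw₃]

theorem ptolemyRatio_ellipsePoint_le {ε t₁ t₂ t₃ t₄ : ℝ} (hε : ε ^ 2 < 1)
    (h₁₂ : t₁ < t₂) (h₂₃ : t₂ < t₃) (h₃₄ : t₃ < t₄) (h₄₁ : t₄ < t₁ + 2 * π) :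
    ptolemyRatio (ellipsePoint ε t₁) (ellipsePoint ε t₂) (ellipsePoint ε t₃) (ellipsePoint ε t₄)
      ≤ (1 + √(1 - ε ^ 2) ^ 2) / (2 * √(1 - ε ^ 2)) := by
  set b := √(1 - ε ^ 2)
  have hb : 0 < b := sqrt_pos.2 (by linarith)
  have hb₁ : b ≤ 1 := sqrt_le_one.2 (by nlinarith)
  have hg : ∀ z, 0 ≤ chordFactor b z := fun z =>
    (sq_nonneg b).trans (chordFactor_mem_Icc (pow_le_one₀ hb.le hb₁) z).1
  have hs : ∀ {x y}, x ≤ y → y ≤ x + 2 * π → 0 ≤ sin ((y - x) / 2) :=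
    fun hxy hyx => sin_nonneg_of_nonneg_of_le_pi (by linarith) (by linarith)
  have hs₁₂ := hs h₁₂.le (by linarith)
  have hs₃₄ := hs h₃₄.le (by linarith)
  have hs₁₄ := hs (x := t₁) (y := t₄) (by linarith) (by linarith)
  have hs₂₃ := hs h₂₃.le (by linarith)
  have hs₁₃ := hs (x := t₁) (y := t₃) (by linarith) (by linarith)
  have hs₂₄ := hs (x := t₂) (y := t₄) (by linarith) (by linarith)
  have hid := chordFactor_ptolemy b t₁ t₂ t₃ t₄
  rw [← sq_sqrt (hg (t₁ + t₂)), ← sq_sqrt (hg (t₃ + t₄)), ← sq_sqrt (hg (t₁ + t₄)),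
    ← sq_sqrt (hg (t₂ + t₃)), ← sq_sqrt (hg (t₁ + t₃)), ← sq_sqrt (hg (t₂ + t₄))] at hid
  have key := mul_add_mul_le_of_sq_add_sq_eq hb (mul_nonneg hs₁₂ hs₃₄) (mul_nonneg hs₁₄ hs₂₃)
    (mul_nonneg hs₁₃ hs₂₄) (sqrt_chordFactor_mem_Icc hb.le hb₁ _)
    (sqrt_chordFactor_mem_Icc hb.le hb₁ _) hid
  unfold ptolemyRatio
  simp only [norm_ellipsePoint_sub]
  rw [abs_of_nonneg hs₁₂, abs_of_nonneg hs₃₄, abs_of_nonneg hs₁₄, abs_of_nonneg hs₂₃,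
    abs_of_nonneg hs₁₃, abs_of_nonneg hs₂₄]
  apply div_le_of_le_mul₀ (by positivity) (by positivity)
  linear_combination 4 * key

lemma sin_pi_mul_div_two_le {b : ℝ} (hb₀ : 0 ≤ b) (hb₁ : b ≤ 1) :
    sin (π * b / 2) ≤ 2 * b / (1 + b ^ 2) := by
  rcases le_total b (1 / 2) with hb | hb
  · have hπ : π < 3.15 := pi_lt_d2
    calc sin (π * b / 2) ≤ π * b / 2 := sin_le (by positivity)
      _ ≤ 2 * b / (1 + b ^ 2) := by
        rw [le_div_iff₀ (by positivity)]
        nlinarith [mul_nonneg hb₀ (by nlinarith : 0 ≤ 4 - π * (1 + b ^ 2))]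
  · set x := π * (1 - b) / 2 with hx_def
    have hπ : 3 < π := pi_gt_three
    have hx : 0 ≤ x := by positivity
    have hbx : 1 - b ^ 2 ≤ 2 * b * x := by
      nlinarith [mul_nonneg (sub_nonneg.2 hb₁) (by nlinarith : 0 ≤ π * b - 1 - b)]
    have hsqrt : (1 + b ^ 2) / (2 * b) ≤ √(x ^ 2 + 1) := by
      rw [le_sqrt (by positivity) (by positivity), div_pow, div_le_iff₀ (by positivity)]
      nlinarith [mul_self_le_mul_self (by nlinarith : 0 ≤ 1 - b ^ 2) hbx]
    calc sin (π * b / 2) = cos x := by rw [← cos_pi_div_two_sub]; congr 1; ring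
      _ ≤ 1 / √(x ^ 2 + 1) := cos_le_one_div_sqrt_sq_add_one (by linarith) (by nlinarith [pi_pos])
      _ ≤ 1 / ((1 + b ^ 2) / (2 * b)) := one_div_le_one_div_of_le (by positivity) hsqrt
      _ = 2 * b / (1 + b ^ 2) := one_div_div _ _

theorem stmt2 (ε : ℝ) (hε0 : 0 ≤ ε) (hε1 : ε < 1) :
    ellipsePtolemyConst ε ≤ 1 / Real.sin (π * Real.sqrt (1 - ε ^ 2) / 2) := by
  have hε : ε ^ 2 < 1 := by nlinarith
  have hb : 0 < √(1 - ε ^ 2) := sqrt_pos.2 (by linarith)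
  have hb₁ : √(1 - ε ^ 2) ≤ 1 := sqrt_le_one.2 (by nlinarith)
  have hsin : 0 < sin (π * √(1 - ε ^ 2) / 2) :=
    sin_pos_of_pos_of_lt_pi (by positivity) (by nlinarith [pi_pos])
  have hbound : (1 + √(1 - ε ^ 2) ^ 2) / (2 * √(1 - ε ^ 2))
      ≤ 1 / sin (π * √(1 - ε ^ 2) / 2) := by
    rw [← one_div_div]
    exact one_div_le_one_div_of_le hsin (sin_pi_mul_div_two_le hb.le hb₁)
  refine Real.sSup_le ?_ (one_div_pos.2 hsin).le
  rintro r ⟨θ₁, θ₂, θ₃, θ₄, h₀, h₁₂, h₂₃, h₃₄, h₄, rfl⟩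
  exact (ptolemyRatio_ellipsePoint_le hε h₁₂ h₂₃ h₃₄ (by linarith)).trans hbound
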